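/- arXiv:1405.6692 — 5 statements merged into one kernel-verified Lean document; each statement's English description precedes it below -/
import Mathlib

section
/- Let y : (ℤ+1/2) → [0,∞] and let γ ∈ (0,∞). Let i₁ < i₂ ≤ i₃ be integers (i₃ possibly +∞). Define the average Av(i,j)(y) := (1/|j−i|) · Σ_{a half-integer with i < a < j} y_a. If Av(i₁,i)(y) > γ for every integer i ∈ [i₂,i₃], then there exists a half-integer-shifted index i* ∈ [i₁,i₂) ∩ ℤ such that for every integer i' ∈ (i*,i₃], Av(i*,i')(y) ≥ γ (i.e. the running averages started from i* all stay ≥ γ up to i₃). -/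
open scoped ENNReal

set_option maxHeartbeats 1000000 in
/-- Lemma `lem:goodset`: if the running averages of the gaps `y` started from `i₁`
exceed `γ` at every integer point of `[i₂,i₃]`, then there is a starting index
`i₀ ∈ [i₁,i₂)` from which all running averages up to `i₃` are at least `γ`.
Here the half-integer `a + 1/2` is encoded by the integer `a`, so that the
half-integers strictly between integers `i < j` are `Finset.Ico i j`. -/
theorem stmt1 (y : ℤ → ℝ≥0∞) (γ : ℝ≥0∞) (hγ0 : 0 < γ) (hγtop : γ < ⊤)
    (i₁ i₂ i₃ : ℤ) (h12 : i₁ < i₂) (h23 : i₂ ≤ i₃)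
    (hav : ∀ i : ℤ, i₂ ≤ i → i ≤ i₃ →
      γ < (∑ a ∈ Finset.Ico i₁ i, y a) / ((i - i₁).toNat : ℝ≥0∞)) :
    ∃ i₀ : ℤ, i₁ ≤ i₀ ∧ i₀ < i₂ ∧ ∀ i' : ℤ, i₀ < i' → i' ≤ i₃ →
      γ ≤ (∑ a ∈ Finset.Ico i₀ i', y a) / ((i' - i₀).toNat : ℝ≥0∞) := by
  classical
  set P : ℤ → Prop := fun i => (∑ a ∈ Finset.Ico i₁ i, y a) ≤ γ * ((i - i₁).toNat : ℝ≥0∞) with hP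
  have h1 : i₁ ∈ (Finset.Ico i₁ i₂).filter P := by
    simp [P, h12, Finset.mem_filter, Finset.mem_Ico]
  set S := (Finset.Ico i₁ i₂).filter P with hS
  have hne : S.Nonempty := ⟨i₁, h1⟩
  set i₀ := S.max' hne with hi₀
  have hi₀mem : i₀ ∈ S := S.max'_mem hne
  have hi₀Ico : i₁ ≤ i₀ ∧ i₀ < i₂ := by
    have := (Finset.mem_filter.1 hi₀mem).1
    exact Finset.mem_Ico.1 this
  have hi₀P : (∑ a ∈ Finset.Ico i₁ i₀, y a) ≤ γ * ((i₀ - i₁).toNat : ℝ≥0∞) := (Finset.mem_filter.1 hi₀mem).2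
  refine ⟨i₀, hi₀Ico.1, hi₀Ico.2, ?_⟩
  intro i' h0' h'3
  -- key: for all i in (i₀, i₃], γ * (i - i₁).toNat ≤ f i
  have key : γ * ((i' - i₁).toNat : ℝ≥0∞) ≤ ∑ a ∈ Finset.Ico i₁ i', y a := by
    by_cases hc : i' < i₂
    · -- maximality: i' not in S, but i' ∈ Ico i₁ i₂
      have hmem : i' ∈ Finset.Ico i₁ i₂ := Finset.mem_Ico.2 ⟨le_trans hi₀Ico.1 h0'.le, hc⟩
      have hnot : ¬ P i' := by
        intro hp
        have : i' ∈ S := Finset.mem_filter.2 ⟨hmem, hp⟩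
        exact absurd (S.le_max' i' this) (not_le.2 h0')
      exact (not_le.1 hnot).le
    · have havi := hav i' (not_lt.1 hc) h'3
      have hn0 : ((i' - i₁).toNat : ℝ≥0∞) ≠ 0 := by
        simp only [ne_eq, Nat.cast_eq_zero, Int.toNat_eq_zero, not_le]
        omega
      have hnt : ((i' - i₁).toNat : ℝ≥0∞) ≠ ⊤ := by simp
      have := (ENNReal.lt_div_iff_mul_lt (Or.inl hn0) (Or.inl hnt)).1 havi
      exact this.le
  -- split sum
  have hsplit : (∑ a ∈ Finset.Ico i₁ i₀, y a) + ∑ a ∈ Finset.Ico i₀ i', y a = ∑ a ∈ Finset.Ico i₁ i', y a := by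
    rw [← Finset.Ico_union_Ico_eq_Ico hi₀Ico.1 h0'.le,
      Finset.sum_union (Finset.Ico_disjoint_Ico_consecutive i₁ i₀ i')]
  have hnat : (i' - i₁).toNat = (i₀ - i₁).toNat + (i' - i₀).toNat := by omega
  have hchain : γ * ((i₀ - i₁).toNat : ℝ≥0∞) + γ * ((i' - i₀).toNat : ℝ≥0∞)
      ≤ γ * ((i₀ - i₁).toNat : ℝ≥0∞) + ∑ a ∈ Finset.Ico i₀ i', y a := by
    calc γ * ((i₀ - i₁).toNat : ℝ≥0∞) + γ * ((i' - i₀).toNat : ℝ≥0∞)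
        = γ * ((i' - i₁).toNat : ℝ≥0∞) := by
          rw [hnat]; push_cast; ring
      _ ≤ ∑ a ∈ Finset.Ico i₁ i', y a := key
      _ = (∑ a ∈ Finset.Ico i₁ i₀, y a) + ∑ a ∈ Finset.Ico i₀ i', y a := hsplit.symm
      _ ≤ γ * ((i₀ - i₁).toNat : ℝ≥0∞) + ∑ a ∈ Finset.Ico i₀ i', y a :=
          add_le_add_left hi₀P _
  have hfin : γ * ((i₀ - i₁).toNat : ℝ≥0∞) ≠ ⊤ :=
    ENNReal.mul_ne_top hγtop.ne (by simp)
  have hcancel : γ * ((i' - i₀).toNat : ℝ≥0∞) ≤ ∑ a ∈ Finset.Ico i₀ i', y a :=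
    (ENNReal.add_le_add_iff_left hfin).1 hchain
  have hn0 : ((i' - i₀).toNat : ℝ≥0∞) ≠ 0 := by
    simp only [ne_eq, Nat.cast_eq_zero, Int.toNat_eq_zero, not_le]
    omega
  exact (ENNReal.le_div_iff_mul_le (Or.inl hn0) (Or.inl (by simp))).2 hcancel
end

section
/- Let A be a finite subset of the half-integers ℤ+1/2 and n a positive integer. Define g_(i,+∞)(A) := sup over integers j > i of |{a ∈ A : i < a < j}| / (j−i), and let I_n := { i ∈ ℤ : g_(i,+∞)(A) > 1/n }. Then |I_n| ≤ n·|A|. -/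
namespace Topple

/-- The "height" function: `h(i) = n·|A ∩ (-∞,i)| − i`. -/
def hh (A : Finset ℤ) (n : ℕ) (i : ℤ) : ℤ := n * ((A.filter (· < i)).card : ℤ) - i

lemma card_step (A : Finset ℤ) (i : ℤ) :
    ((A.filter (· < i + 1)).card : ℤ)
      = ((A.filter (· < i)).card : ℤ) + (if i ∈ A then 1 else 0) := by
  have h1 : A.filter (· < i + 1) = A.filter (fun a => a < i ∨ a = i) := by
    apply Finset.filter_congr; intro a _; omega
  have hd : Disjoint (A.filter (· < i)) (A.filter (fun a => a = i)) := by
    rw [Finset.disjoint_left]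
    intro a ha hb
    simp only [Finset.mem_filter] at ha hb
    omega
  rw [h1, Finset.filter_or, Finset.card_union_of_disjoint hd, Finset.filter_eq']
  split_ifs <;> simp

lemma hh_step (A : Finset ℤ) (n : ℕ) (i : ℤ) :
    hh A n (i + 1) = hh A n i + (if i ∈ A then (n : ℤ) else 0) - 1 := by
  unfold hh
  rw [card_step]
  split_ifs <;> ring

lemma hh_diff (A : Finset ℤ) (n : ℕ) {i j : ℤ} (hij : i ≤ j) :
    hh A n j - hh A n i
      = n * ((A.filter (fun a => i ≤ a ∧ a < j)).card : ℤ) - (j - i) := by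
  have h1 : A.filter (· < j) = A.filter (fun a => a < i ∨ (i ≤ a ∧ a < j)) := by
    apply Finset.filter_congr; intro a _; omega
  have hd : Disjoint (A.filter (· < i)) (A.filter (fun a => i ≤ a ∧ a < j)) := by
    rw [Finset.disjoint_left]
    intro a ha hb
    simp only [Finset.mem_filter] at ha hb
    omega
  have h2 : ((A.filter (· < j)).card : ℤ)
      = ((A.filter (· < i)).card : ℤ) + ((A.filter (fun a => i ≤ a ∧ a < j)).card : ℤ) := by
    rw [h1, Finset.filter_or, Finset.card_union_of_disjoint hd]
    push_cast; ring
  unfold hh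
  rw [h2]; ring

/-- `P(i) = max(0, sup_{i<j≤B'} h(j) − h(i))`. -/
noncomputable def PP (A : Finset ℤ) (n : ℕ) (B i : ℤ) : ℤ :=
  max 0 ((Finset.Icc (i + 1) (max (i + 1) B)).sup'
    (Finset.nonempty_Icc.mpr (le_max_left _ _)) (hh A n) - hh A n i)

lemma PP_nonneg (A : Finset ℤ) (n : ℕ) (B i : ℤ) : 0 ≤ PP A n B i := le_max_left _ _

lemma PP_eq_zero (A : Finset ℤ) (n : ℕ) {B : ℤ} (hB : ∀ a ∈ A, a < B) {i : ℤ}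
    (hi : B ≤ i) : PP A n B i = 0 := by
  have hni : i ∉ A := fun h => absurd (hB i h) (by omega)
  have hsup : (Finset.Icc (i + 1) (max (i + 1) B)).sup'
      (Finset.nonempty_Icc.mpr (le_max_left _ _)) (hh A n) ≤ hh A n i - 1 := by
    apply Finset.sup'_le
    intro j hj
    simp only [Finset.mem_Icc] at hj
    have : j = i + 1 := by omega
    subst this
    rw [hh_step, if_neg hni]
    omega
  unfold PP
  omega

lemma max_aux (u v w : ℤ) : max 0 (max u v - w) = max 0 ((u - w) + max 0 (v - u)) := by
  rcases le_total u v with h | h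
  · rw [max_eq_right h, max_eq_right (by omega : (0:ℤ) ≤ v - u)]
    congr 1; ring
  · rw [max_eq_left h, max_eq_left (by omega : v - u ≤ (0:ℤ))]
    congr 1; ring

lemma PP_rec (A : Finset ℤ) (n : ℕ) {B : ℤ} (hB : ∀ a ∈ A, a < B) {i : ℤ}
    (hi : i < B) :
    PP A n B i = max 0 ((if i ∈ A then (n : ℤ) else 0) - 1 + PP A n B (i + 1)) := by
  rcases eq_or_lt_of_le (by omega : i + 1 ≤ B) with h1 | h1
  · -- i + 1 = B
    have hz : PP A n B (i + 1) = 0 := PP_eq_zero A n hB (by omega)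
    have hset : Finset.Icc (i + 1) (max (i + 1) B) = {i + 1} := by
      have : max (i + 1) B = i + 1 := by omega
      rw [this, Finset.Icc_self]
    have hsup : (Finset.Icc (i + 1) (max (i + 1) B)).sup'
        (Finset.nonempty_Icc.mpr (le_max_left _ _)) (hh A n) = hh A n (i + 1) := by
      rw [Finset.sup'_congr _ hset (fun a _ => rfl), Finset.sup'_singleton]
    rw [hz]
    unfold PP
    rw [hsup, hh_step]
    congr 1; ring
  · -- i + 1 < B
    have hset : Finset.Icc (i + 1) (max (i + 1) B)
        = insert (i + 1) (Finset.Icc (i + 1 + 1) (max (i + 1 + 1) B)) := by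
      ext a
      simp only [Finset.mem_Icc, Finset.mem_insert]
      omega
    have hsup : (Finset.Icc (i + 1) (max (i + 1) B)).sup'
        (Finset.nonempty_Icc.mpr (le_max_left _ _)) (hh A n)
        = max (hh A n (i + 1)) ((Finset.Icc (i + 1 + 1) (max (i + 1 + 1) B)).sup'
            (Finset.nonempty_Icc.mpr (le_max_left _ _)) (hh A n)) := by
      rw [Finset.sup'_congr _ hset (fun a _ => rfl)]
      rw [Finset.sup'_insert]
    have hP1 : PP A n B (i + 1) = max 0 ((Finset.Icc (i + 1 + 1) (max (i + 1 + 1) B)).sup'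
        (Finset.nonempty_Icc.mpr (le_max_left _ _)) (hh A n) - hh A n (i + 1)) := rfl
    rw [hP1]
    unfold PP
    rw [hsup, max_aux, hh_step]
    congr 1; ring

lemma one_le_PP (A : Finset ℤ) (n : ℕ) {B : ℤ} (hB : ∀ a ∈ A, a < B) {i j : ℤ}
    (hij : i < j)
    (hlt : j - i < n * ((A.filter (fun a => i ≤ a ∧ a < j)).card : ℤ)) :
    1 ≤ PP A n B i := by
  have hcpos : 0 < (A.filter (fun a => i ≤ a ∧ a < j)).card := by
    rcases Nat.eq_zero_or_pos (A.filter (fun a => i ≤ a ∧ a < j)).card with h | h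
    · rw [h] at hlt; simp at hlt; omega
    · exact h
  obtain ⟨a, ha⟩ := Finset.card_pos.mp hcpos
  simp only [Finset.mem_filter] at ha
  have hiB : i < B := lt_of_le_of_lt ha.2.1 (hB a ha.1)
  have hij' : i < min j B := by omega
  have hjj : min j B ≤ j := min_le_left _ _
  have hfe : A.filter (fun a => i ≤ a ∧ a < j)
      = A.filter (fun a => i ≤ a ∧ a < min j B) := by
    apply Finset.filter_congr; intro b hb
    have := hB b hb; omega
  have hdiff := hh_diff A n (le_of_lt hij')
  rw [hfe] at hlt
  have hmem : min j B ∈ Finset.Icc (i + 1) (max (i + 1) B) := by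
    simp only [Finset.mem_Icc]
    omega
  have hle := Finset.le_sup' (hh A n) hmem
  have h1 : 1 ≤ (Finset.Icc (i + 1) (max (i + 1) B)).sup'
      (Finset.nonempty_Icc.mpr (le_max_left _ _)) (hh A n) - hh A n i := by omega
  exact le_trans h1 (le_max_right _ _)

lemma PP_bounds (A : Finset ℤ) (n : ℕ) {B m : ℤ} (hB : ∀ a ∈ A, a < B)
    (hm : ∀ a ∈ A, m ≤ a) {i : ℤ} (h1 : 1 ≤ PP A n B i) :
    m - n * A.card ≤ i ∧ i < B := by
  have h2 : 1 ≤ (Finset.Icc (i + 1) (max (i + 1) B)).sup'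
      (Finset.nonempty_Icc.mpr (le_max_left _ _)) (hh A n) - hh A n i := by
    unfold PP at h1
    omega
  obtain ⟨j, hjmem, hj⟩ := Finset.exists_mem_eq_sup'
    (Finset.nonempty_Icc.mpr (le_max_left (i + 1) B)) (hh A n)
  rw [hj] at h2
  simp only [Finset.mem_Icc] at hjmem
  have hdiff := hh_diff A n (by omega : i ≤ j)
  have hcpos : 0 < (A.filter (fun a => i ≤ a ∧ a < j)).card := by
    rcases Nat.eq_zero_or_pos (A.filter (fun a => i ≤ a ∧ a < j)).card with h | h
    · rw [h] at hdiff; simp at hdiff; omega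
    · exact h
  obtain ⟨a, ha⟩ := Finset.card_pos.mp hcpos
  simp only [Finset.mem_filter] at ha
  have hiB : i < B := lt_of_le_of_lt ha.2.1 (hB a ha.1)
  have hma : m ≤ a := hm a ha.1
  have hcA : ((A.filter (fun a => i ≤ a ∧ a < j)).card : ℤ) ≤ (A.card : ℤ) := by
    exact_mod_cast Finset.card_le_card (Finset.filter_subset _ _)
  have hnc : (n : ℤ) * ((A.filter (fun a => i ≤ a ∧ a < j)).card : ℤ)
      ≤ (n : ℤ) * (A.card : ℤ) :=
    mul_le_mul_of_nonneg_left hcA (by positivity)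
  exact ⟨by omega, hiB⟩

lemma telescope (A : Finset ℤ) (n : ℕ) (hn : 0 < n) {B : ℤ} (hB : ∀ a ∈ A, a < B) :
    ∀ k : ℕ,
      (((Finset.Ico (B - (k : ℤ)) B).filter (fun i => 1 ≤ PP A n B i)).card : ℤ)
          + PP A n B (B - (k : ℤ))
        ≤ n * ((A.filter (fun a => B - (k : ℤ) ≤ a)).card : ℤ) := by
  intro k
  induction k with
  | zero =>
    simp only [Nat.cast_zero, sub_zero, Finset.Ico_self, Finset.filter_empty,
      Finset.card_empty, Nat.cast_zero, zero_add]
    rw [PP_eq_zero A n hB le_rfl]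
    positivity
  | succ k ih =>
    have hn' : (1 : ℤ) ≤ (n : ℤ) := by exact_mod_cast hn
    set i0 : ℤ := B - (((k : ℕ) + 1 : ℕ) : ℤ) with hi0
    have hc2 : i0 = B - (k : ℤ) - 1 := by rw [hi0, Nat.cast_add, Nat.cast_one]; ring
    have hi0B : i0 < B := by omega
    have hi01 : i0 + 1 = B - (k : ℤ) := by omega
    have hIco : Finset.Ico i0 B
        = insert i0 (Finset.Ico (B - (k : ℤ)) B) := by
      ext a
      simp only [Finset.mem_Ico, Finset.mem_insert]
      omega
    have hni : i0 ∉ Finset.Ico (B - (k : ℤ)) B := by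
      simp only [Finset.mem_Ico]
      omega
    have hcard' : (((Finset.Ico i0 B).filter
          (fun i => 1 ≤ PP A n B i)).card : ℤ)
        ≤ 1 + (((Finset.Ico (B - (k : ℤ)) B).filter (fun i => 1 ≤ PP A n B i)).card : ℤ) := by
      rw [hIco, Finset.filter_insert]
      split_ifs
      · rw [Finset.card_insert_of_notMem (fun h => hni (Finset.mem_of_mem_filter _ h))]
        push_cast; omega
      · omega
    have hrec := PP_rec A n hB hi0B
    rw [hi01] at hrec
    have hPn := PP_nonneg A n B (B - (k : ℤ))
    by_cases hA0 : i0 ∈ A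
    · rw [if_pos hA0] at hrec
      have hrec2 : PP A n B i0 = (n : ℤ) - 1 + PP A n B (B - (k : ℤ)) := by
        rw [hrec]; exact max_eq_right (by omega)
      have hAc : ((A.filter (fun a => B - (k : ℤ) ≤ a)).card : ℤ) + 1
          ≤ ((A.filter (fun a => i0 ≤ a)).card : ℤ) := by
        have hsub : insert i0 (A.filter (fun a => B - (k : ℤ) ≤ a))
            ⊆ A.filter (fun a => i0 ≤ a) := by
          intro a ha
          simp only [Finset.mem_insert, Finset.mem_filter] at ha ⊢
          rcases ha with rfl | ⟨h1, h2⟩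
          · exact ⟨hA0, by omega⟩
          · exact ⟨h1, by omega⟩
        have hnotm : i0 ∉ A.filter (fun a => B - (k : ℤ) ≤ a) := by
          simp only [Finset.mem_filter]
          intro ⟨_, h⟩; omega
        have := Finset.card_le_card hsub
        rw [Finset.card_insert_of_notMem hnotm] at this
        push_cast
        omega
      have hmul : (n : ℤ) * (((A.filter (fun a => B - (k : ℤ) ≤ a)).card : ℤ) + 1)
          ≤ (n : ℤ) * ((A.filter (fun a => i0 ≤ a)).card : ℤ) :=
        mul_le_mul_of_nonneg_left hAc (by positivity)
      have hexp : (n : ℤ) * (((A.filter (fun a => B - (k : ℤ) ≤ a)).card : ℤ) + 1)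
          = (n : ℤ) * ((A.filter (fun a => B - (k : ℤ) ≤ a)).card : ℤ) + n := by ring
      omega
    · rw [if_neg hA0] at hrec
      have hAc : ((A.filter (fun a => B - (k : ℤ) ≤ a)).card : ℤ)
          ≤ ((A.filter (fun a => i0 ≤ a)).card : ℤ) := by
        have hsub : A.filter (fun a => B - (k : ℤ) ≤ a)
            ⊆ A.filter (fun a => i0 ≤ a) := by
          intro a ha
          simp only [Finset.mem_filter] at ha ⊢
          exact ⟨ha.1, by omega⟩
        exact_mod_cast Finset.card_le_card hsub
      have hmul : (n : ℤ) * ((A.filter (fun a => B - (k : ℤ) ≤ a)).card : ℤ)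
          ≤ (n : ℤ) * ((A.filter (fun a => i0 ≤ a)).card : ℤ) :=
        mul_le_mul_of_nonneg_left hAc (by positivity)
      by_cases hP0 : 1 ≤ PP A n B i0
      · have h9 : 1 + PP A n B i0 ≤ PP A n B (B - (k : ℤ)) := by
          rcases max_cases (0 : ℤ) (0 - 1 + PP A n B (B - (k : ℤ))) with ⟨e1, e2⟩ | ⟨e1, e2⟩ <;>
            rw [e1] at hrec <;> omega
        omega
      · have hPP0 : PP A n B i0 = 0 := by
          have := PP_nonneg A n B i0
          omega
        have hcard2 : (((Finset.Ico i0 B).filter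
              (fun i => 1 ≤ PP A n B i)).card : ℤ)
            ≤ (((Finset.Ico (B - (k : ℤ)) B).filter (fun i => 1 ≤ PP A n B i)).card : ℤ) := by
          rw [hIco, Finset.filter_insert, if_neg hP0]
        omega

end Topple

/-- The toppling inequality `eq:topple`: if `A` is a finite set of half-integers
(the half-integer `a + 1/2` being encoded by the integer `a`, so that the
half-integers in `(i,j)` are `Finset.Ico i j`), and
`g_(i,+∞)(A) := sup_{j>i} |A ∩ (i,j)|/(j−i)`, then the set of integers `i`
with `g_(i,+∞)(A) > 1/n` has at most `n·|A|` elements. -/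
theorem stmt2 (A : Finset ℤ) (n : ℕ) (hn : 0 < n) :
    {i : ℤ | ∃ j : ℤ, i < j ∧
        (j - i : ℤ) < (n : ℤ) * ((A.filter (fun a => i ≤ a ∧ a < j)).card : ℤ)}.Finite ∧
    {i : ℤ | ∃ j : ℤ, i < j ∧
        (j - i : ℤ) < (n : ℤ) * ((A.filter (fun a => i ≤ a ∧ a < j)).card : ℤ)}.ncard
      ≤ n * A.card := by
  rcases A.eq_empty_or_nonempty with rfl | hA
  · have he : {i : ℤ | ∃ j : ℤ, i < j ∧
        (j - i : ℤ) < (n : ℤ) * (((∅ : Finset ℤ).filter (fun a => i ≤ a ∧ a < j)).card : ℤ)}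
        = ∅ := by
      ext i
      simp only [Set.mem_setOf_eq, Finset.filter_empty, Finset.card_empty,
        Nat.cast_zero, mul_zero, Set.mem_empty_iff_false, iff_false]
      rintro ⟨j, h1, h2⟩; omega
    rw [he]
    exact ⟨Set.finite_empty, by simp⟩
  · set B : ℤ := A.max' hA + 1 with hBdef
    set m : ℤ := A.min' hA with hmdef
    have hB : ∀ a ∈ A, a < B := fun a ha => by
      have := A.le_max' a ha; omega
    have hm : ∀ a ∈ A, m ≤ a := fun a ha => A.min'_le a ha
    set L : ℤ := m - n * A.card with hLdef
    have hLB : L ≤ B := by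
      have h1 : m ≤ B := by
        have := A.min'_le (A.max' hA) (A.max'_mem hA); omega
      have h2 : (0 : ℤ) ≤ n * A.card := by positivity
      omega
    set k : ℕ := (B - L).toNat with hkdef
    have hk : B - (k : ℤ) = L := by
      rw [hkdef]
      omega
    set T := (Finset.Ico (B - (k : ℤ)) B).filter (fun i => 1 ≤ Topple.PP A n B i) with hT
    have hsub : {i : ℤ | ∃ j : ℤ, i < j ∧
        (j - i : ℤ) < (n : ℤ) * ((A.filter (fun a => i ≤ a ∧ a < j)).card : ℤ)} ⊆ ↑T := by
      rintro i ⟨j, hij, hlt⟩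
      have h1 : 1 ≤ Topple.PP A n B i := Topple.one_le_PP A n hB hij hlt
      have h2 := Topple.PP_bounds A n hB hm h1
      simp only [hT, Finset.coe_filter, Set.mem_setOf_eq, Finset.mem_Ico]
      exact ⟨⟨by omega, h2.2⟩, h1⟩
    have hTfin : (↑T : Set ℤ).Finite := T.finite_toSet
    refine ⟨Set.Finite.subset hTfin hsub, ?_⟩
    have h3 : _ ≤ (↑T : Set ℤ).ncard := Set.ncard_le_ncard hsub hTfin
    rw [Set.ncard_coe_finset] at h3
    have h4 := Topple.telescope A n hn hB k
    have h5 := Topple.PP_nonneg A n B (B - (k : ℤ))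
    have h6 : ((A.filter (fun a => B - (k : ℤ) ≤ a)).card : ℤ) ≤ (A.card : ℤ) := by
      exact_mod_cast Finset.card_le_card (Finset.filter_subset _ _)
    have h7 : (n : ℤ) * ((A.filter (fun a => B - (k : ℤ) ≤ a)).card : ℤ)
        ≤ (n : ℤ) * (A.card : ℤ) := mul_le_mul_of_nonneg_left h6 (by positivity)
    have h8 : (T.card : ℤ) ≤ (n : ℤ) * (A.card : ℤ) := by
      rw [hT]
      omega
    calc ({i : ℤ | ∃ j : ℤ, i < j ∧
        (j - i : ℤ) < (n : ℤ) * ((A.filter (fun a => i ≤ a ∧ a < j)).card : ℤ)}.ncard)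
        ≤ T.card := h3
      _ ≤ n * A.card := by exact_mod_cast h8
end

section
/- For real numbers x > 0, z > 0, and μ ≥ 0, one has Σ_{i=1}^∞ 1 / ( (x + (i∧μ) + (i−μ)₊·z) · ((i∧μ) + (i−μ)₊·z) ) ≤ (c/x)·log(x+1) + (c/(x·z))·log( (1 + (μ+x)/z) / (1 + μ/z) ), for some universal constant c > 0, where i∧μ := min(i,μ) and (i−μ)₊ := max(i−μ,0). -/
/-- log(1+u) ≥ u/(1+u) for u ≥ 0. -/
private lemma log_ratio_lb {u : ℝ} (hu : 0 ≤ u) : u / (1 + u) ≤ Real.log (1 + u) := by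
  have h := Real.log_le_sub_one_of_pos (show (0:ℝ) < 1/(1+u) by positivity)
  have h1 : Real.log (1/(1+u)) = - Real.log (1+u) := by
    rw [one_div, Real.log_inv]
  rw [h1] at h
  have h2 : 1 - 1/(1+u) = u/(1+u) := by field_simp; ring
  linarith [h2 ▸ (by linarith : 1 - 1/(1+u) ≤ Real.log (1+u))]

/-- Concavity lower bound: for 0 < p ≤ q,
`(q-p)·x/(q(q+x)) ≤ D p - D q` where `D t = log(t+x) - log t`. -/
private lemma lemA {x p q : ℝ} (hx : 0 < x) (hp : 0 < p) (hpq : p ≤ q) :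
    (q - p) * x / (q * (q + x)) ≤
      (Real.log (p + x) - Real.log p) - (Real.log (q + x) - Real.log q) := by
  have hq : 0 < q := lt_of_lt_of_le hp hpq
  have hqx : 0 < q + x := by linarith
  have hpx : 0 < p + x := by linarith
  set r := p / q with hrdef
  set s := (p + x) / (q + x) with hsdef
  have hr0 : 0 < r := by positivity
  have hs0 : 0 < s := by positivity
  have hs1 : s ≤ 1 := by rw [div_le_one hqx]; linarith
  have hrs : r ≤ s := by
    rw [hrdef, hsdef, div_le_div_iff₀ hq hqx]; nlinarith
  have key : s - r ≤ Real.log s - Real.log r := by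
    have h := Real.log_le_sub_one_of_pos (show (0:ℝ) < r / s by positivity)
    rw [Real.log_div (ne_of_gt hr0) (ne_of_gt hs0)] at h
    have h2 : r / s - 1 = (r - s)/s := by field_simp
    have h4 : (r - s)/s ≤ r - s := by
      rw [div_le_iff₀ hs0]; nlinarith
    linarith [h2 ▸ h]
  have e1 : Real.log s = Real.log (p+x) - Real.log (q+x) :=
    Real.log_div (ne_of_gt hpx) (ne_of_gt hqx)
  have e2 : Real.log r = Real.log p - Real.log q :=
    Real.log_div (ne_of_gt hp) (ne_of_gt hq)
  have e3 : s - r = (q - p) * x / (q * (q + x)) := by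
    rw [hrdef, hsdef]; field_simp; ring
  rw [e1, e2] at key
  linarith [e3 ▸ key]

/-- Concavity upper bound: for 0 < a ≤ b,
`D a - D b ≤ (b-a)·x/(a(a+x))`. -/
private lemma lemB {x a b : ℝ} (hx : 0 < x) (ha : 0 < a) (hab : a ≤ b) :
    (Real.log (a + x) - Real.log a) - (Real.log (b + x) - Real.log b) ≤
      (b - a) * x / (a * (a + x)) := by
  have hb : 0 < b := lt_of_lt_of_le ha hab
  have hax : 0 < a + x := by linarith
  have hbx : 0 < b + x := by linarith
  set u := b / a with hud
  set v := (b + x) / (a + x) with hvd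
  have hv1 : 1 ≤ v := by rw [hvd, le_div_iff₀ hax]; linarith
  have hvu : v ≤ u := by rw [hud, hvd, div_le_div_iff₀ hax ha]; nlinarith
  have hv0 : 0 < v := by linarith
  have hu0 : 0 < u := by positivity
  have key : Real.log u - Real.log v ≤ u - v := by
    have h := Real.log_le_sub_one_of_pos (show (0:ℝ) < u / v by positivity)
    rw [Real.log_div (ne_of_gt hu0) (ne_of_gt hv0)] at h
    have h2 : u / v - 1 = (u - v)/v := by field_simp
    have h4 : (u - v)/v ≤ u - v := by
      rw [div_le_iff₀ hv0]; nlinarith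
    linarith [h2 ▸ h]
  have e1 : Real.log u = Real.log b - Real.log a :=
    Real.log_div (ne_of_gt hb) (ne_of_gt ha)
  have e2 : Real.log v = Real.log (b+x) - Real.log (a+x) :=
    Real.log_div (ne_of_gt hbx) (ne_of_gt hax)
  have e3 : u - v = (b - a) * x / (a * (a + x)) := by
    rw [hud, hvd]; field_simp; ring
  rw [e1, e2] at key
  linarith [e3 ▸ key]

/-- Telescoping sum bound. -/
private lemma telesc {x c s : ℝ} (hx : 0 < x) (hc : 0 < c) (hs : 0 < s) (n : ℕ) :
    ∑ j ∈ Finset.range n, 1 / ((x + (c + ((j:ℝ)+1)*s)) * (c + ((j:ℝ)+1)*s)) ≤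
      (Real.log (c + x) - Real.log c) / (x * s) := by
  have hxs : 0 < x * s := by positivity
  set F : ℕ → ℝ := fun j => Real.log (c + (j:ℝ)*s + x) - Real.log (c + (j:ℝ)*s) with hF
  have hFnn : ∀ j : ℕ, 0 ≤ F j := by
    intro j
    have h0 : (0:ℝ) < c + (j:ℝ)*s := by positivity
    have := Real.log_le_log h0 (by linarith : c + (j:ℝ)*s ≤ c + (j:ℝ)*s + x)
    simpa [hF] using sub_nonneg.2 this
  have step : ∀ j ∈ Finset.range n,
      1 / ((x + (c + ((j:ℝ)+1)*s)) * (c + ((j:ℝ)+1)*s)) ≤ (F j - F (j+1)) / (x * s) := by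
    intro j _
    have hp : (0:ℝ) < c + (j:ℝ)*s := by positivity
    have hpq : c + (j:ℝ)*s ≤ c + ((j:ℝ)+1)*s := by nlinarith
    have hA := lemA hx hp hpq
    have hq : (0:ℝ) < c + ((j:ℝ)+1)*s := by positivity
    have e : (c + ((j:ℝ)+1)*s - (c + (j:ℝ)*s)) * x
        / ((c + ((j:ℝ)+1)*s) * (c + ((j:ℝ)+1)*s + x))
        = (1 / ((x + (c + ((j:ℝ)+1)*s)) * (c + ((j:ℝ)+1)*s))) * (x * s) := by
      field_simp; ring
    have eF : F j - F (j+1) = (Real.log (c + (j:ℝ)*s + x) - Real.log (c + (j:ℝ)*s))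
        - (Real.log (c + ((j:ℝ)+1)*s + x) - Real.log (c + ((j:ℝ)+1)*s)) := by
      simp only [hF]; push_cast; ring_nf
    rw [eF, le_div_iff₀ hxs, ← e]
    exact hA
  calc ∑ j ∈ Finset.range n, 1 / ((x + (c + ((j:ℝ)+1)*s)) * (c + ((j:ℝ)+1)*s))
      ≤ ∑ j ∈ Finset.range n, (F j - F (j+1)) / (x * s) := Finset.sum_le_sum step
    _ = (∑ j ∈ Finset.range n, (F j - F (j+1))) / (x * s) := by
        rw [Finset.sum_div]
    _ = (F 0 - F n) / (x * s) := by rw [Finset.sum_range_sub' F n]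
    _ ≤ F 0 / (x * s) := by
        have hn := hFnn n
        gcongr
        linarith
    _ = (Real.log (c + x) - Real.log c) / (x * s) := by
        simp [hF]

set_option maxHeartbeats 1000000 in
/-- The elementary summation inequality used to control the compression term:
for `x, z > 0` and `μ ≥ 0`,
`Σ_{i≥1} 1/((x + (i∧μ) + (i−μ)₊ z)((i∧μ) + (i−μ)₊ z))
  ≤ (c/x) log(x+1) + (c/(xz)) log((1+(μ+x)/z)/(1+μ/z))`
for a universal constant `c > 0`.  The sum over `i ≥ 1` is encoded by
`i = m + 1`, `m : ℕ`. -/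
theorem stmt6 :
    ∃ c : ℝ, 0 < c ∧ ∀ x z μ : ℝ, 0 < x → 0 < z → 0 ≤ μ →
      (∑' m : ℕ, 1 / ((x + min ((m:ℝ)+1) μ + max ((m:ℝ)+1-μ) 0 * z) *
          (min ((m:ℝ)+1) μ + max ((m:ℝ)+1-μ) 0 * z)))
        ≤ (c/x) * Real.log (x+1)
          + (c/(x*z)) * Real.log ((1 + (μ+x)/z) / (1 + μ/z)) := by
  refine ⟨10, by norm_num, ?_⟩
  intro x z μ hx hz hμ
  set f : ℕ → ℝ := fun m => 1 / ((x + min ((m:ℝ)+1) μ + max ((m:ℝ)+1-μ) 0 * z) *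
          (min ((m:ℝ)+1) μ + max ((m:ℝ)+1-μ) 0 * z)) with hfdef
  have hb0 : 0 < μ + z := by linarith
  have hL : Real.log ((1 + (μ+x)/z) / (1 + μ/z))
      = Real.log ((μ+z) + x) - Real.log (μ+z) := by
    have he : (1 + (μ+x)/z) / (1 + μ/z) = ((μ+z)+x)/(μ+z) := by
      rw [div_eq_div_iff (by positivity) (ne_of_gt hb0)]; field_simp; ring
    rw [he, Real.log_div (by positivity) (ne_of_gt hb0)]
  rw [hL]
  set L := Real.log ((μ+z) + x) - Real.log (μ+z) with hLdef
  have hL0 : 0 ≤ L := sub_nonneg.2 (Real.log_le_log hb0 (by linarith))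
  have hlog1 : 0 ≤ Real.log (x+1) := Real.log_nonneg (by linarith)
  have hlogx : x / (x+1) ≤ Real.log (x+1) := by
    have h := log_ratio_lb (le_of_lt hx)
    rw [add_comm 1 x] at h; exact h
  have hxlog : x ≤ Real.log (x+1)*(x+1) := by
    have e : x/(x+1)*(x+1) = x := div_mul_cancel₀ x (by linarith : x+1 ≠ 0)
    nlinarith [mul_le_mul_of_nonneg_right hlogx (show (0:ℝ) ≤ x+1 by linarith)]
  -- positivity of denominators
  have hd : ∀ m : ℕ, 0 < min ((m:ℝ)+1) μ + max ((m:ℝ)+1-μ) 0 * z := by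
    intro m
    rcases le_or_gt ((m:ℝ)+1) μ with h | h
    · rw [min_eq_left h, max_eq_right (by linarith)]
      have : (0:ℝ) ≤ m := Nat.cast_nonneg m
      nlinarith
    · rw [min_eq_right (le_of_lt h), max_eq_left (by linarith)]
      nlinarith [mul_pos (show (0:ℝ) < (m:ℝ)+1-μ by linarith) hz]
  have hf0 : ∀ m : ℕ, 0 ≤ f m := by
    intro m
    exact le_of_lt (div_pos one_pos (mul_pos (by linarith [hd m]) (by linarith [hd m])))
  -- structural constants
  set K : ℕ := Nat.floor μ with hKdef
  have hKμ : (K:ℝ) ≤ μ := Nat.floor_le hμ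
  have hμK : μ < (K:ℝ)+1 := Nat.lt_floor_add_one μ
  set δ : ℝ := (K:ℝ)+1-μ with hδdef
  have hδ0 : 0 < δ := by simp only [hδdef]; linarith
  have hδ1 : δ ≤ 1 := by simp only [hδdef]; linarith
  set a : ℝ := μ + δ*z with hadef
  have ha0 : 0 < a := by nlinarith [mul_pos hδ0 hz]
  clear_value a δ K L f
  -- region 1 terms
  have hfg : ∀ m : ℕ, m+1 ≤ K → f m = 1/((x+((m:ℝ)+1))*((m:ℝ)+1)) := by
    intro m hm
    have hm' : ((m:ℝ)+1) ≤ μ := by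
      have : ((m+1:ℕ):ℝ) ≤ (K:ℝ) := Nat.cast_le.2 hm
      push_cast at this; linarith
    simp only [hfdef, min_eq_left hm', max_eq_right (by linarith : (m:ℝ)+1-μ ≤ 0),
      zero_mul, add_zero]
  -- region-1 sum bound
  have hinv : (x+1)⁻¹ ≤ Real.log (x+1)/x := by
    rw [le_div_iff₀ hx, inv_mul_eq_div]
    exact hlogx
  have hR1 : ∀ q : ℕ, ∑ m ∈ Finset.range q, 1/((x+((m:ℝ)+1))*((m:ℝ)+1))
      ≤ 2*Real.log (x+1)/x := by
    intro q
    rcases q with _ | p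
    · simp; positivity
    · rw [Finset.sum_range_succ']
      have e : ∀ k ∈ Finset.range p, (1:ℝ)/((x+(((k+1:ℕ):ℝ)+1))*(((k+1:ℕ):ℝ)+1))
          = 1 / ((x + ((1:ℝ) + ((k:ℝ)+1)*1)) * ((1:ℝ) + ((k:ℝ)+1)*1)) := by
        intro k _; push_cast; ring_nf
      have ht := telesc hx one_pos one_pos p
      rw [Real.log_one, sub_zero, mul_one, add_comm (1:ℝ) x] at ht
      have h1 : ∑ k ∈ Finset.range p, (1:ℝ)/((x+(((k+1:ℕ):ℝ)+1))*(((k+1:ℕ):ℝ)+1))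
          ≤ Real.log (x+1)/x := by
        rw [Finset.sum_congr rfl e]; exact ht
      have hg0 : (1:ℝ)/((x+(((0:ℕ):ℝ)+1))*(((0:ℕ):ℝ)+1)) ≤ Real.log (x+1)/x := by
        push_cast
        calc (1:ℝ)/((x+(0+1))*(0+1)) = (x+1)⁻¹ := by norm_num
          _ ≤ _ := hinv
      exact le_trans (add_le_add h1 hg0) (le_of_eq (by ring))
  -- boundary term
  have hfK : f K = 1/((x+a)*a) := by
    have h1 : μ ≤ ((K:ℕ):ℝ)+1 := le_of_lt hμK
    simp only [hfdef, min_eq_right h1, max_eq_left (by linarith : (0:ℝ) ≤ (K:ℝ)+1-μ)]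
    have e : x + μ + ((K:ℝ)+1-μ)*z = x + a := by rw [hadef, hδdef]; ring
    have e2 : μ + ((K:ℝ)+1-μ)*z = a := by rw [hadef, hδdef]
    rw [e, e2]
  have hbd : 1/((x+a)*a) ≤ 4*Real.log (x+1)/x + 4*L/(x*z) := by
    rcases le_or_gt (1/2 : ℝ) δ with hδ2 | hδ2
    · -- a ≥ b/2
      have hab2 : (μ+z)/2 ≤ a := by nlinarith [mul_le_mul_of_nonneg_right hδ2 (le_of_lt hz)]
      have h1 : 1/((x+a)*a) ≤ 4/((x+(μ+z))*(μ+z)) := by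
        rw [div_le_div_iff₀ (mul_pos (by linarith) ha0) (by positivity)]
        nlinarith [mul_pos hx hb0, sq_nonneg (2*a-(μ+z))]
      have hLlb : x/((μ+z)+x) ≤ L := by
        have h := log_ratio_lb (show (0:ℝ) ≤ x/(μ+z) by positivity)
        have e1 : (1:ℝ) + x/(μ+z) = ((μ+z)+x)/(μ+z) := by field_simp
        have e2 : (x/(μ+z))/(1+x/(μ+z)) = x/((μ+z)+x) := by
          rw [e1]; field_simp
        rw [e2, e1, Real.log_div (by positivity) (ne_of_gt hb0)] at h
        rw [hLdef]; exact h
      have hLx : x ≤ L*((μ+z)+x) := by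
        have e : x/((μ+z)+x)*((μ+z)+x) = x :=
          div_mul_cancel₀ x (by positivity : (μ+z)+x ≠ 0)
        nlinarith [mul_le_mul_of_nonneg_right hLlb (show (0:ℝ) ≤ (μ+z)+x by positivity)]
      have h2 : 4/((x+(μ+z))*(μ+z)) ≤ 4*L/(x*z) := by
        rw [div_le_div_iff₀ (by positivity) (by positivity)]
        nlinarith [mul_le_mul_of_nonneg_right hLx (le_of_lt hb0),
          mul_nonneg (le_of_lt hx) hμ, mul_pos hx hz]
      have : 1/((x+a)*a) ≤ 4*L/(x*z) := h1.trans h2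
      have h4 : 0 ≤ 4*Real.log (x+1)/x := by positivity
      linarith
    · -- μ ≥ 1/2, a ≥ 1/2
      have hK0 : (0:ℝ) ≤ (K:ℝ) := Nat.cast_nonneg K
      have hμ2 : 1/2 ≤ μ := by simp only [hδdef] at hδ2; linarith
      have ha2 : 1/2 ≤ a := by nlinarith [mul_nonneg (le_of_lt hδ0) (le_of_lt hz)]
      have h1 : 1/((x+a)*a) ≤ 4*Real.log (x+1)/x := by
        have h2 : 1/((x+a)*a) ≤ 4/(x+1) := by
          rw [div_le_div_iff₀ (mul_pos (by linarith) ha0) (by linarith)]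
          nlinarith [sq_nonneg (2*a-1), mul_le_mul_of_nonneg_left ha2 (le_of_lt hx)]
        have h3 : 4/(x+1) ≤ 4*Real.log (x+1)/x := by
          rw [div_le_div_iff₀ (by linarith) hx]
          nlinarith [hxlog]
        exact h2.trans h3
      have h4 : 0 ≤ 4*L/(x*z) := by
        apply div_nonneg _ (by positivity); linarith
      linarith
  -- tail log bound
  have htl : Real.log (a+x) - Real.log a ≤ 2*L + 4*z*Real.log (x+1) := by
    rcases le_or_gt (1/2 : ℝ) δ with hδ2 | hδ2
    · have hab2 : (μ+z)/2 ≤ a := by nlinarith [mul_le_mul_of_nonneg_right hδ2 (le_of_lt hz)]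
      have hhalf : (0:ℝ) < (μ+z)/2 := by linarith
      have hmono : Real.log (a+x) - Real.log a
          ≤ Real.log ((μ+z)/2+x) - Real.log ((μ+z)/2) := by
        have hA := lemA hx hhalf hab2
        have h0 : 0 ≤ (a - (μ+z)/2)*x/(a*(a+x)) :=
          div_nonneg (by nlinarith) (le_of_lt (mul_pos ha0 (by linarith)))
        linarith
      have heq : Real.log ((μ+z)/2+x) - Real.log ((μ+z)/2)
          = Real.log ((μ+z)+2*x) - Real.log (μ+z) := by
        have e1 : (μ+z)/2+x = ((μ+z)+2*x)/2 := by ring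
        rw [e1, Real.log_div (by linarith) two_ne_zero,
          Real.log_div (ne_of_gt hb0) two_ne_zero]
        ring
      have hsq : Real.log ((μ+z)+2*x) - Real.log (μ+z) ≤ 2*L := by
        have e2 : Real.log ((μ+z)+2*x) + Real.log (μ+z)
            = Real.log (((μ+z)+2*x)*(μ+z)) :=
          (Real.log_mul (by linarith) (ne_of_gt hb0)).symm
        have e3 : Real.log (((μ+z)+x)*((μ+z)+x))
            = Real.log ((μ+z)+x) + Real.log ((μ+z)+x) :=
          Real.log_mul (by linarith) (by linarith)
        have h5 : Real.log (((μ+z)+2*x)*(μ+z)) ≤ Real.log (((μ+z)+x)*((μ+z)+x)) :=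
          Real.log_le_log (by positivity) (by nlinarith [sq_nonneg x])
        simp only [hLdef]
        linarith
      have h6 : 0 ≤ 4*z*Real.log (x+1) := by positivity
      linarith
    · have hK0 : (0:ℝ) ≤ (K:ℝ) := Nat.cast_nonneg K
      have hμ2 : 1/2 ≤ μ := by simp only [hδdef] at hδ2; linarith
      have ha2 : 1/2 ≤ a := by nlinarith [mul_nonneg (le_of_lt hδ0) (le_of_lt hz)]
      have hab : a ≤ μ+z := by nlinarith [mul_le_mul_of_nonneg_right hδ1 (le_of_lt hz)]
      have hB := lemB hx (show (0:ℝ) < a by linarith) hab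
      have h4 : ((μ+z) - a)*x/(a*(a+x)) ≤ 4*z*Real.log (x+1) := by
        have hba : (μ+z) - a ≤ z := by nlinarith [mul_nonneg (le_of_lt hδ0) (le_of_lt hz)]
        have hba0 : 0 ≤ (μ+z) - a := by linarith
        have hden : (x+1)/4 ≤ a*(a+x) := by nlinarith [sq_nonneg (2*a-1)]
        rw [div_le_iff₀ (mul_pos ha0 (by linarith))]
        nlinarith [mul_le_mul_of_nonneg_left hden
            (show (0:ℝ) ≤ 4*(z*Real.log (x+1)) by positivity),
          mul_le_mul_of_nonneg_left hxlog (le_of_lt hz),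
          mul_le_mul_of_nonneg_right hba (le_of_lt hx)]
      linarith [hLdef, hL0, hB, h4]
  -- tail sum bound
  have hft : ∀ j : ℕ, f (K+1+j) = 1 / ((x + (a + ((j:ℝ)+1)*z)) * (a + ((j:ℝ)+1)*z)) := by
    intro j
    have h1 : μ ≤ ((K+1+j:ℕ):ℝ)+1 := by push_cast; linarith
    have h2 : (0:ℝ) ≤ ((K+1+j:ℕ):ℝ)+1-μ := by linarith
    simp only [hfdef, min_eq_right h1, max_eq_left h2]
    have e1 : x + μ + (((K+1+j:ℕ):ℝ)+1-μ)*z = x + (a + ((j:ℝ)+1)*z) := by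
      rw [hadef, hδdef]; push_cast; ring
    have e2 : μ + (((K+1+j:ℕ):ℝ)+1-μ)*z = a + ((j:ℝ)+1)*z := by
      rw [hadef, hδdef]; push_cast; ring
    rw [e1, e2]
  have htail : ∀ p : ℕ, ∑ j ∈ Finset.range p, f (K+1+j)
      ≤ (Real.log (a+x) - Real.log a)/(x*z) := by
    intro p
    calc ∑ j ∈ Finset.range p, f (K+1+j)
        = ∑ j ∈ Finset.range p, 1 / ((x + (a + ((j:ℝ)+1)*z)) * (a + ((j:ℝ)+1)*z)) :=
          Finset.sum_congr rfl (fun j _ => hft j)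
      _ ≤ (Real.log (a+x) - Real.log a)/(x*z) := telesc hx ha0 hz p
  -- decomposition
  have hdec : ∀ p : ℕ, ∑ m ∈ Finset.range (K+1+p), f m
      = (∑ m ∈ Finset.range K, f m) + f K + ∑ j ∈ Finset.range p, f (K+1+j) := by
    intro p
    induction p with
    | zero => simp [Finset.sum_range_succ]
    | succ p ih =>
      have e : K+1+(p+1) = (K+1+p)+1 := by omega
      rw [e, Finset.sum_range_succ, ih, Finset.sum_range_succ]
      ring
  -- main finite-sum bound
  have hsum : ∀ n : ℕ, ∑ m ∈ Finset.range n, f m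
      ≤ 10/x * Real.log (x+1) + 10/(x*z) * L := by
    have hXY : 0 ≤ 10/(x*z) * L := mul_nonneg (by positivity) hL0
    have hconv : ∀ t : ℝ, 0 ≤ t → 2*Real.log (x+1)/x + t
        ≤ 10/x * Real.log (x+1) + t := by
      intro t ht
      have : 2*Real.log (x+1)/x ≤ 10/x * Real.log (x+1) := by
        rw [div_le_iff₀ hx]; field_simp; nlinarith
      linarith
    intro n
    rcases le_or_gt n K with hn | hn
    · have e : ∑ m ∈ Finset.range n, f m
          = ∑ m ∈ Finset.range n, 1/((x+((m:ℝ)+1))*((m:ℝ)+1)) := by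
        refine Finset.sum_congr rfl (fun m hm => hfg m ?_)
        have := Finset.mem_range.1 hm; omega
      rw [e]
      have := hR1 n
      linarith [hconv (10/(x*z)*L) hXY]
    · obtain ⟨p, rfl⟩ : ∃ p, n = K+1+p := ⟨n - (K+1), by omega⟩
      rw [hdec p]
      have e : ∑ m ∈ Finset.range K, f m
          = ∑ m ∈ Finset.range K, 1/((x+((m:ℝ)+1))*((m:ℝ)+1)) := by
        refine Finset.sum_congr rfl (fun m hm => hfg m ?_)
        have := Finset.mem_range.1 hm; omega
      have h1 : ∑ m ∈ Finset.range K, f m ≤ 2*Real.log (x+1)/x := by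
        rw [e]; exact hR1 K
      have h2 : f K ≤ 4*Real.log (x+1)/x + 4*L/(x*z) := hfK ▸ hbd
      have h3 : ∑ j ∈ Finset.range p, f (K+1+j)
          ≤ 2*L/(x*z) + 4*Real.log (x+1)/x := by
        have h31 := htail p
        have h32 : (Real.log (a+x) - Real.log a)/(x*z)
            ≤ (2*L + 4*z*Real.log (x+1))/(x*z) := by
          apply div_le_div_of_nonneg_right htl (by positivity)
        have h33 : (2*L + 4*z*Real.log (x+1))/(x*z)
            = 2*L/(x*z) + 4*Real.log (x+1)/x := by
          field_simp
        linarith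
      have hfin : 10*Real.log (x+1)/x + 6*L/(x*z)
          ≤ 10/x * Real.log (x+1) + 10/(x*z) * L := by
        have e1 : 10/x * Real.log (x+1) = 10*Real.log (x+1)/x := by ring
        have e2 : 10/(x*z) * L = 10*L/(x*z) := by ring
        have e3 : 6*L/(x*z) ≤ 10*L/(x*z) := by
          apply div_le_div_of_nonneg_right ?_ (by positivity); linarith
        rw [e1, e2]
        linarith
      have hsum2 : 2*Real.log (x+1)/x + (4*Real.log (x+1)/x + 4*L/(x*z))
          + (2*L/(x*z) + 4*Real.log (x+1)/x) = 10*Real.log (x+1)/x + 6*L/(x*z) := by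
        ring
      linarith
  by_cases hS : Summable f
  · exact Summable.tsum_le_of_sum_range_le hS hsum
  · rw [tsum_eq_zero_of_not_summable hS]
    have : 0 ≤ 10/x * Real.log (x+1) := by positivity
    linarith [mul_nonneg (show (0:ℝ) ≤ 10/(x*z) by positivity) hL0]
end

section
/- Let α ∈ (0,1), ρ > 0, and y : (ℤ+1/2) → (0,∞) with norm ‖y‖ := sup_{m ∈ ℤ\{0}} |Av_(0,m)(y) − ρ|·|m|^α < ∞, where Av_(0,m)(y) := (1/|m|) Σ_{a between 0 and m} y_a. For k a positive integer, define m_i := ⌊i^{1/α}⌋ for i ≥ 0 (and m_i := −m_{|i|} for i < 0), m̃^k_i := m_{ki}, and the block A_{b,k} := (m̃^k_{b−1/2}, m̃^k_{b+1/2}) for half-integers b, with L_{b,k} := A_{b,k} ∩ (ℤ+1/2). Then, provided the partition is nondegenerate (every L_{b,k} nonempty), for every half-integer b: |Av_{A_{b,k}}(y) − ρ| ≤ (c/k)·‖y‖ for a constant c depending only on α. -/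
private lemma core_est (α : ℝ) (hα0 : 0 < α) (hα1 : α < 1) (k : ℕ) (hk : 0 < k)
    (i : ℤ) (hi : 0 ≤ i) (m₁ m₂ : ℤ)
    (h1 : m₁ = ⌊(i:ℝ) ^ (1/α)⌋) (h2 : m₂ = ⌊((i:ℝ) + k) ^ (1/α)⌋) (hlt : m₁ < m₂) :
    (m₁:ℝ) ^ (1-α) + (m₂:ℝ) ^ (1-α) ≤ (4 / k) * ((m₂:ℝ) - m₁) := by
  have hx : (0:ℝ) ≤ (i:ℝ) := by exact_mod_cast hi
  have hk' : (0:ℝ) < (k:ℝ) := by exact_mod_cast hk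
  have hz : (0:ℝ) < (i:ℝ) + k := by linarith
  have he : (0:ℝ) < 1/α - 1 := by
    rw [sub_pos, lt_div_iff₀ hα0, one_mul]; exact hα1
  have hsplit : ∀ t : ℝ, 0 ≤ t → t ^ (1/α) = t * t ^ (1/α - 1) := by
    intro t ht
    rcases ht.eq_or_lt with h | h
    · rw [← h, Real.zero_rpow (by positivity), Real.zero_rpow he.ne', mul_zero]
    · nth_rewrite 1 [show (1/α) = 1 + (1/α - 1) by ring]
      rw [Real.rpow_add h, Real.rpow_one]
  have hm1nn : (0:ℤ) ≤ m₁ := h1 ▸ Int.floor_nonneg.mpr (Real.rpow_nonneg hx _)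
  have hm2pos : (0:ℤ) < m₂ := lt_of_le_of_lt hm1nn hlt
  have hm1le : (m₁:ℝ) ≤ (i:ℝ) ^ (1/α) := h1 ▸ Int.floor_le _
  have hm2le : (m₂:ℝ) ≤ ((i:ℝ)+k) ^ (1/α) := h2 ▸ Int.floor_le _
  have hm2gt : ((i:ℝ)+k) ^ (1/α) - 1 < (m₂:ℝ) := h2 ▸ Int.sub_one_lt_floor _
  have hmono : (i:ℝ) ^ (1/α - 1) ≤ ((i:ℝ)+k) ^ (1/α - 1) :=
    Real.rpow_le_rpow hx (by linarith) he.le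
  have hkey : (k:ℝ) * ((i:ℝ)+k) ^ (1/α - 1) ≤ ((i:ℝ)+k) ^ (1/α) - (i:ℝ) ^ (1/α) := by
    rw [hsplit _ hx, hsplit _ hz.le]
    have h1' : (i:ℝ) * (i:ℝ)^(1/α-1) ≤ (i:ℝ) * (((i:ℝ)+k)^(1/α-1)) :=
      mul_le_mul_of_nonneg_left hmono hx
    nlinarith
  have hL1 : (1:ℝ) ≤ (m₂:ℝ) - m₁ := by
    have : m₁ + 1 ≤ m₂ := hlt
    have : ((m₁:ℝ)) + 1 ≤ m₂ := by exact_mod_cast this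
    linarith
  have hL2 : (k:ℝ) * ((i:ℝ)+k) ^ (1/α - 1) ≤ 2 * ((m₂:ℝ) - m₁) := by linarith
  have hnum : (m₁:ℝ)^(1-α) + (m₂:ℝ)^(1-α) ≤ 2 * (((i:ℝ)+k) ^ (1/α - 1)) := by
    have hm1r : (0:ℝ) ≤ (m₁:ℝ) := by exact_mod_cast hm1nn
    have hm2r : (m₁:ℝ) ≤ (m₂:ℝ) := by exact_mod_cast hlt.le
    have h1a : (m₁:ℝ)^(1-α) ≤ (m₂:ℝ)^(1-α) :=
      Real.rpow_le_rpow hm1r hm2r (by linarith)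
    have h2a : (m₂:ℝ)^(1-α) ≤ (((i:ℝ)+k) ^ (1/α))^(1-α) :=
      Real.rpow_le_rpow (le_trans hm1r hm2r) hm2le (by linarith)
    have h3a : (((i:ℝ)+k) ^ (1/α))^(1-α) = ((i:ℝ)+k) ^ (1/α - 1) := by
      rw [← Real.rpow_mul hz.le]
      congr 1
      field_simp
    linarith
  have hzp : (0:ℝ) < ((i:ℝ)+k) ^ (1/α - 1) := Real.rpow_pos_of_pos hz _
  rw [div_mul_eq_mul_div, le_div_iff₀ hk']
  nlinarith [mul_le_mul_of_nonneg_right hnum hk'.le]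

/-- The mesoscopic block-average estimate `eq:avbd`: if
`‖y‖ = sup_{m≠0} |Av_(0,m)(y) − ρ|·|m|^α ≤ N < ∞`, then the average of `y`
over each block `A_{b,k} = (m̃^k_{b−1/2}, m̃^k_{b+1/2})` differs from `ρ` by at
most `(C/k)·N`, with `C` depending only on `α`.  The half-integer
`b = c + 1/2` is encoded by the integer `c`, so `b ∓ 1/2` are `c`, `c+1`;
`mf i = ⌊i^{1/α}⌋` for `i ≥ 0`, `mf i = −mf(−i)` for `i < 0`, and
`m̃^k_i = mf (k i)`.  Gaps are indexed by integers (`a` encoding `a + 1/2`). -/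
theorem stmt7 (α : ℝ) (hα : α ∈ Set.Ioo (0:ℝ) 1) :
    ∃ C : ℝ, 0 < C ∧ ∀ (ρ : ℝ), 0 < ρ → ∀ (y : ℤ → ℝ), (∀ a, 0 < y a) →
    ∀ (N : ℝ),
    (∀ m : ℤ, m ≠ 0 →
      |(∑ a ∈ Finset.Ico (min 0 m) (max 0 m), y a) / |(m:ℝ)| - ρ| * |(m:ℝ)| ^ α ≤ N) →
    ∀ (k : ℕ), 0 < k →
    ∀ (mf : ℤ → ℤ),
    (∀ i : ℤ, 0 ≤ i → mf i = ⌊(i:ℝ) ^ (1/α)⌋) →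
    (∀ i : ℤ, i < 0 → mf i = - mf (-i)) →
    (∀ c : ℤ, mf ((k:ℤ)*c) < mf ((k:ℤ)*(c+1))) →
    ∀ c : ℤ,
      |(∑ a ∈ Finset.Ico (mf ((k:ℤ)*c)) (mf ((k:ℤ)*(c+1))), y a) /
          ((mf ((k:ℤ)*(c+1)) - mf ((k:ℤ)*c) : ℤ) : ℝ) - ρ|
        ≤ (C / k) * N := by
  obtain ⟨hα0, hα1⟩ := hα
  refine ⟨4, by norm_num, ?_⟩
  intro ρ hρ y hy N hN k hk mf hmf1 hmf2 hmono c
  have hkR : (0:ℝ) < (k:ℝ) := by exact_mod_cast hk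
  have hkZ : (0:ℤ) < (k:ℤ) := by exact_mod_cast hk
  -- signed partial sums
  set T : ℤ → ℝ := fun m => if 0 ≤ m then ∑ a ∈ Finset.Ico 0 m, y a
      else -∑ a ∈ Finset.Ico m 0, y a with hTdef
  have hcons : ∀ a b c : ℤ, a ≤ b → b ≤ c →
      (∑ x ∈ Finset.Ico a b, y x) + ∑ x ∈ Finset.Ico b c, y x
        = ∑ x ∈ Finset.Ico a c, y x := by
    intro a b c hab hbc
    rw [← Finset.sum_union (Finset.Ico_disjoint_Ico_consecutive a b c),
      Finset.Ico_union_Ico_eq_Ico hab hbc]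
  have hsum : ∀ m₁ m₂ : ℤ, m₁ ≤ m₂ →
      ∑ a ∈ Finset.Ico m₁ m₂, y a = T m₂ - T m₁ := by
    intro m₁ m₂ h
    rcases le_or_gt 0 m₁ with h1 | h1
    · have h2 : (0:ℤ) ≤ m₂ := le_trans h1 h
      simp only [hTdef]
      rw [if_pos h1, if_pos h2, ← hcons 0 m₁ m₂ h1 h]
      ring
    · rcases le_or_gt 0 m₂ with h2 | h2
      · simp only [hTdef]
        rw [if_pos h2, if_neg (not_le.mpr h1), ← hcons m₁ 0 m₂ h1.le h2]
        ring
      · simp only [hTdef]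
        rw [if_neg (not_le.mpr h1), if_neg (not_le.mpr h2), ← hcons m₁ m₂ 0 h h2.le]
        ring
  -- partial sum deviation bound
  have hT : ∀ m : ℤ, |T m - ρ * m| ≤ N * |(m:ℝ)| ^ (1 - α) := by
    intro m
    rcases eq_or_ne m 0 with rfl | hm
    · simp [hTdef, Real.zero_rpow (show (1:ℝ) - α ≠ 0 by linarith)]
    · have h := hN m hm
      have hu : (0:ℝ) < |(m:ℝ)| := abs_pos.mpr (Int.cast_ne_zero.mpr hm)
      set S := ∑ a ∈ Finset.Ico (min 0 m) (max 0 m), y a with hS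
      have hTS : |T m - ρ * m| = abs (S - ρ * |(m:ℝ)|) := by
        rcases lt_or_ge 0 m with hm0 | hm0
        · have hmr : (0:ℝ) ≤ (m:ℝ) := by exact_mod_cast hm0.le
          simp only [hTdef, if_pos hm0.le, hS, min_eq_left hm0.le, max_eq_right hm0.le,
            abs_of_nonneg hmr]
        · have hm0' : m < 0 := lt_of_le_of_ne hm0 hm
          have hmr : (m:ℝ) ≤ 0 := by exact_mod_cast hm0
          simp only [hTdef, if_neg (not_le.mpr hm0'), hS, min_eq_right hm0'.le,
            max_eq_left hm0'.le, abs_of_nonpos hmr]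
          rw [show -(∑ a ∈ Finset.Ico m 0, y a) - ρ * m
              = -((∑ a ∈ Finset.Ico m 0, y a) - ρ * -(m:ℝ)) by ring, abs_neg]
      rw [hTS]
      have key : S / |(m:ℝ)| - ρ = (S - ρ * |(m:ℝ)|) / |(m:ℝ)| := by
        field_simp
      rw [key, abs_div, abs_abs, div_mul_eq_mul_div, div_le_iff₀ hu] at h
      have hsplit2 : N * |(m:ℝ)| = N * |(m:ℝ)| ^ (1-α) * |(m:ℝ)| ^ α := by
        rw [mul_assoc, ← Real.rpow_add hu]
        norm_num
      rw [hsplit2] at h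
      exact le_of_mul_le_mul_right h (Real.rpow_pos_of_pos hu _)
  -- block data
  set m₁ := mf ((k:ℤ)*c) with hm₁
  set m₂ := mf ((k:ℤ)*(c+1)) with hm₂
  have hlt : m₁ < m₂ := hmono c
  have hN0 : 0 ≤ N := le_trans (by positivity) (hN 1 one_ne_zero)
  have hnum : |(m₁:ℝ)| ^ (1-α) + |(m₂:ℝ)| ^ (1-α) ≤ (4 / k) * ((m₂:ℝ) - m₁) := by
    rcases le_or_gt 0 c with hc | hc
    · have hi : (0:ℤ) ≤ (k:ℤ)*c := mul_nonneg hkZ.le hc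
      have e1 : m₁ = ⌊(((k:ℤ)*c : ℤ):ℝ) ^ (1/α)⌋ := by rw [hm₁, hmf1 _ hi]
      have e2 : m₂ = ⌊((((k:ℤ)*c : ℤ):ℝ) + k) ^ (1/α)⌋ := by
        rw [hm₂, hmf1 _ (mul_nonneg hkZ.le (by omega))]
        congr 2
        push_cast
        ring
      have hcore := core_est α hα0 hα1 k hk _ hi m₁ m₂ e1 e2 hlt
      have hm1nn : (0:ℤ) ≤ m₁ :=
        e1 ▸ Int.floor_nonneg.mpr (Real.rpow_nonneg (by exact_mod_cast hi) _)
      have hm2nn : (0:ℤ) ≤ m₂ := le_trans hm1nn hlt.le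
      rw [abs_of_nonneg (by exact_mod_cast hm1nn : (0:ℝ) ≤ (m₁:ℝ)),
        abs_of_nonneg (by exact_mod_cast hm2nn : (0:ℝ) ≤ (m₂:ℝ))]
      exact hcore
    · set c' : ℤ := -(c+1) with hc'
      have hc'nn : (0:ℤ) ≤ c' := by omega
      have hn := hmono c'
      have hi : (0:ℤ) ≤ (k:ℤ)*c' := mul_nonneg hkZ.le hc'nn
      have em₁ : m₁ = - mf ((k:ℤ)*(c'+1)) := by
        rw [hm₁, hmf2 _ (mul_neg_of_pos_of_neg hkZ hc)]
        congr 2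
        rw [hc']; ring
      have em₂ : m₂ = - mf ((k:ℤ)*c') := by
        rcases lt_or_eq_of_le (show c + 1 ≤ 0 by omega) with h | h
        · rw [hm₂, hmf2 _ (mul_neg_of_pos_of_neg hkZ h)]
          congr 2
          rw [hc']; ring
        · have hc0 : c' = 0 := by omega
          have h0 : mf 0 = 0 := by
            rw [hmf1 0 le_rfl, show ((0:ℤ):ℝ) = (0:ℝ) by norm_num,
              Real.zero_rpow (one_div_pos.mpr hα0).ne', Int.floor_zero]
          rw [hm₂, hc0, h]
          simp [h0]
      have e1 : mf ((k:ℤ)*c') = ⌊(((k:ℤ)*c' : ℤ):ℝ) ^ (1/α)⌋ := hmf1 _ hi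
      have e2 : mf ((k:ℤ)*(c'+1)) = ⌊((((k:ℤ)*c' : ℤ):ℝ) + k) ^ (1/α)⌋ := by
        rw [hmf1 _ (mul_nonneg hkZ.le (by omega))]
        congr 2
        push_cast
        ring
      have hcore := core_est α hα0 hα1 k hk _ hi _ _ e1 e2 hn
      have hn1nn : (0:ℤ) ≤ mf ((k:ℤ)*c') :=
        e1 ▸ Int.floor_nonneg.mpr (Real.rpow_nonneg (by exact_mod_cast hi) _)
      have hn2nn : (0:ℤ) ≤ mf ((k:ℤ)*(c'+1)) := le_trans hn1nn hn.le
      rw [em₁, em₂]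
      push_cast
      rw [abs_neg, abs_neg,
        abs_of_nonneg (by exact_mod_cast hn2nn : (0:ℝ) ≤ ((mf ((k:ℤ)*(c'+1)) : ℤ):ℝ)),
        abs_of_nonneg (by exact_mod_cast hn1nn : (0:ℝ) ≤ ((mf ((k:ℤ)*c') : ℤ):ℝ))]
      have heq : (-(((mf ((k:ℤ)*c') : ℤ)):ℝ) - -((mf ((k:ℤ)*(c'+1)) : ℤ):ℝ))
          = ((mf ((k:ℤ)*(c'+1)) : ℤ):ℝ) - ((mf ((k:ℤ)*c') : ℤ):ℝ) := by ring
      rw [heq]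
      linarith [hcore]
  -- assembly
  have hLpos : (0:ℝ) < (m₂:ℝ) - m₁ := by
    have : ((m₁:ℝ)) < (m₂:ℝ) := by exact_mod_cast hlt
    linarith
  have hLne : ((m₂:ℝ) - m₁) ≠ 0 := hLpos.ne'
  have step : |(T m₂ - T m₁) - ρ * ((m₂:ℝ) - m₁)| ≤ N * ((4 / k) * ((m₂:ℝ) - m₁)) := by
    have b1 := hT m₁
    have b2 := hT m₂
    have tri : |(T m₂ - T m₁) - ρ * ((m₂:ℝ) - m₁)|
        ≤ |T m₂ - ρ * m₂| + |T m₁ - ρ * m₁| := by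
      rw [show (T m₂ - T m₁) - ρ * ((m₂:ℝ) - m₁)
          = (T m₂ - ρ * m₂) - (T m₁ - ρ * m₁) by ring]
      exact abs_sub _ _
    have := mul_le_mul_of_nonneg_left hnum hN0
    linarith
  rw [hsum m₁ m₂ hlt.le, show ((m₂ - m₁ : ℤ):ℝ) = (m₂:ℝ) - m₁ by push_cast; ring,
    show (T m₂ - T m₁) / ((m₂:ℝ) - m₁) - ρ
      = ((T m₂ - T m₁) - ρ * ((m₂:ℝ) - m₁)) / ((m₂:ℝ) - m₁) by field_simp,
    abs_div, abs_of_pos hLpos, div_le_iff₀ hLpos]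
  exact le_of_le_of_eq step (by ring)
end

section
/- Fix integers i₁ ≤ i₂, and for gaps y : ((i₁,i₂) ∩ (ℤ+1/2)) → (0,∞) with associated particle positions x (so that y_a = x_{a+1/2} − x_{a−1/2}), define the Lyapunov function ξ(y) := Σ_{i₁ ≤ i < j ≤ i₂} log y_{(i,j)}, where y_{(i,j)} := Σ_{i < a < j} y_a = x_j − x_i. Define the drift f₁(y) := Σ_{i₁ ≤ i < j ≤ i₂} ( (1/y_{(i,j)}) Σ_{i < a < j} β η^I_a(y) − 1/(y_{(i,j)})² ), where η^I_a(y) := 1/y_a − ψ^I_a(y_a, y) with ψ^I_a(y,z) := (1/2) Σ_{i ∈ (i₁,i₂), |i−a|>1} y/(z_{(a,i)}(y+z_{(a,i)})), and β ≥ 1. Then f₁(y) = ((β−1)/2) Σ_{i ≠ j, i,j ∈ [i₁,i₂]} 1/(x_j − x_i)² , which is nonnegative for β ≥ 1 (and strictly positive for β > 1 and i₁ < i₂). -/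
lemma tele (g : ℤ → ℝ) (i : ℤ) : ∀ j : ℤ, i ≤ j → ∑ a ∈ Finset.Ico i j, (g (a+1) - g a) = g j - g i := by
  refine Int.le_induction ?_ ?_
  · simp
  · intro n hn ih
    have h : Finset.Ico i (n+1) = insert n (Finset.Ico i n) := by
      ext a; simp [Finset.mem_Ico, Finset.mem_insert]; omega
    rw [h, Finset.sum_insert (by simp), ih]; ring

lemma cyc3 (A B C : ℝ) (hAB : A ≠ B) (hAC : A ≠ C) (hBC : B ≠ C) :
    1/((A-B)*(A-C)) + 1/((C-A)*(C-B)) + 1/((B-C)*(B-A)) = 0 := by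
  have h1 : A - B ≠ 0 := sub_ne_zero.mpr hAB
  have h2 : A - C ≠ 0 := sub_ne_zero.mpr hAC
  have h3 : B - C ≠ 0 := sub_ne_zero.mpr hBC
  have hD : (A-B)*(A-C)*(B-C) ≠ 0 := mul_ne_zero (mul_ne_zero h1 h2) h3
  have e1 : 1/((A-B)*(A-C)) = (B-C)/((A-B)*(A-C)*(B-C)) := by
    rw [div_eq_div_iff (mul_ne_zero h1 h2) hD]; ring
  have e2 : 1/((C-A)*(C-B)) = (A-B)/((A-B)*(A-C)*(B-C)) := by
    rw [div_eq_div_iff (by rw [show (C-A)*(C-B) = (A-C)*(B-C) by ring]; exact mul_ne_zero h2 h3) hD]; ring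
  have e3 : 1/((B-C)*(B-A)) = (C-A)/((A-B)*(A-C)*(B-C)) := by
    rw [div_eq_div_iff (by rw [show (B-C)*(B-A) = -((A-B)*(B-C)) by ring]; exact neg_ne_zero.mpr (mul_ne_zero h1 h3)) hD]; ring
  rw [e1, e2, e3, ← add_div, ← add_div]
  rw [show (B-C) + (A-B) + (C-A) = 0 by ring, zero_div]

lemma sumsq (I : Finset ℤ) (x : ℤ → ℝ) (hx : ∀ i ∈ I, ∀ j ∈ I, i ≠ j → x i ≠ x j) :
    ∑ k ∈ I, (∑ l ∈ I, if l ≠ k then 1/(x k - x l) else 0)^2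
      = ∑ i ∈ I, ∑ j ∈ I, if j ≠ i then 1/(x j - x i)^2 else 0 := by
  classical
  set H : ℤ → ℤ → ℤ → ℝ := fun k l m =>
    if m ≠ l ∧ l ≠ k ∧ m ≠ k then (1/(x k - x l)) * (1/(x k - x m)) else 0 with hH
  have expand : ∀ k ∈ I, (∑ l ∈ I, if l ≠ k then 1/(x k - x l) else 0)^2
      = (∑ l ∈ I, if l ≠ k then 1/(x k - x l)^2 else 0) + ∑ l ∈ I, ∑ m ∈ I, H k l m := by
    intro k hk
    rw [sq, Finset.sum_mul_sum, ← Finset.sum_add_distrib]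
    refine Finset.sum_congr rfl (fun l hl => ?_)
    rw [← Finset.add_sum_erase I (fun m => (if l ≠ k then 1/(x k - x l) else 0)
          * (if m ≠ k then 1/(x k - x m) else 0)) hl,
        ← Finset.add_sum_erase I (fun m => H k l m) hl]
    have h1 : H k l l = 0 := by simp [hH]
    have h2 : ∀ m ∈ I.erase l, (if l ≠ k then 1/(x k - x l) else 0)
        * (if m ≠ k then 1/(x k - x m) else 0) = H k l m := by
      intro m hm
      have hml : m ≠ l := (Finset.mem_erase.mp hm).1
      by_cases hlk : l ≠ k <;> by_cases hmk : m ≠ k <;> simp [hH, hml, hlk, hmk]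
    rw [Finset.sum_congr rfl h2, h1]
    by_cases hlk : l ≠ k <;> simp [hlk, sq] <;> ring
  rw [Finset.sum_congr rfl expand, Finset.sum_add_distrib]
  have S3 : ∑ k ∈ I, ∑ l ∈ I, ∑ m ∈ I, H k l m = 0 := by
    have c1 : ∑ k ∈ I, ∑ l ∈ I, ∑ m ∈ I, H l m k = ∑ k ∈ I, ∑ l ∈ I, ∑ m ∈ I, H k l m := by
      rw [Finset.sum_comm]
      exact Finset.sum_congr rfl (fun l _ => Finset.sum_comm)
    have c2 : ∑ k ∈ I, ∑ l ∈ I, ∑ m ∈ I, H m k l = ∑ k ∈ I, ∑ l ∈ I, ∑ m ∈ I, H k l m := by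
      rw [show (∑ k ∈ I, ∑ l ∈ I, ∑ m ∈ I, H m k l) = ∑ k ∈ I, ∑ m ∈ I, ∑ l ∈ I, H m k l from
        Finset.sum_congr rfl (fun k _ => Finset.sum_comm)]
      exact Finset.sum_comm
    have key : ∀ k ∈ I, ∀ l ∈ I, ∀ m ∈ I, H k l m + H l m k + H m k l = 0 := by
      intro k hk l hl m hm
      by_cases hkl : l = k
      · subst hkl; simp [hH]
      by_cases hlm : m = l
      · subst hlm; simp [hH]
      by_cases hkm : m = k
      · subst hkm; simp [hH]
      · have g1 : x k ≠ x l := hx k hk l hl (Ne.symm hkl)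
        have g2 : x k ≠ x m := hx k hk m hm (Ne.symm hkm)
        have g3 : x l ≠ x m := hx l hl m hm (Ne.symm hlm)
        simp only [hH]
        rw [if_pos ⟨hlm, hkl, hkm⟩, if_pos ⟨Ne.symm hkm, hlm, Ne.symm hkl⟩,
          if_pos ⟨hkl, Ne.symm hkm, Ne.symm hlm⟩]
        have hc := cyc3 (x k) (x l) (x m) g1 g2 g3
        rw [one_div_mul_one_div, one_div_mul_one_div, one_div_mul_one_div]
        linarith
    have h3 : (3:ℝ) * (∑ k ∈ I, ∑ l ∈ I, ∑ m ∈ I, H k l m) = 0 := by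
      calc (3:ℝ) * (∑ k ∈ I, ∑ l ∈ I, ∑ m ∈ I, H k l m)
          = (∑ k ∈ I, ∑ l ∈ I, ∑ m ∈ I, H k l m) + (∑ k ∈ I, ∑ l ∈ I, ∑ m ∈ I, H l m k)
            + (∑ k ∈ I, ∑ l ∈ I, ∑ m ∈ I, H m k l) := by rw [c1, c2]; ring
        _ = ∑ k ∈ I, ∑ l ∈ I, ∑ m ∈ I, (H k l m + H l m k + H m k l) := by
            simp [Finset.sum_add_distrib]
        _ = 0 := by
            rw [Finset.sum_eq_zero]; intro k hk
            rw [Finset.sum_eq_zero]; intro l hl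
            rw [Finset.sum_eq_zero]; intro m hm
            exact key k hk l hl m hm
    linarith
  rw [S3, add_zero]
  refine Finset.sum_congr rfl (fun k _ => Finset.sum_congr rfl (fun l _ => ?_))
  by_cases h : l ≠ k <;> simp [h]
  rw [show (x k - x l)^2 = (x l - x k)^2 by ring]
lemma pairsum (I : Finset ℤ) (x b : ℤ → ℝ) :
    ∑ i ∈ I, ∑ j ∈ I, (if i < j then (b j - b i)/(x j - x i) else 0)
      = ∑ j ∈ I, b j * ∑ i ∈ I, (if i ≠ j then 1/(x j - x i) else 0) := by
  classical
  have split : ∀ i j : ℤ, (if i < j then (b j - b i)/(x j - x i) else 0)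
      = (if i < j then b j * (1/(x j - x i)) else 0)
        + (if i < j then b i * (1/(x i - x j)) else 0) := by
    intro i j; split_ifs with h
    · rw [show x i - x j = -(x j - x i) by ring, div_neg]; ring
    · ring
  calc ∑ i ∈ I, ∑ j ∈ I, (if i < j then (b j - b i)/(x j - x i) else 0)
      = (∑ i ∈ I, ∑ j ∈ I, (if i < j then b j * (1/(x j - x i)) else 0))
        + ∑ i ∈ I, ∑ j ∈ I, (if i < j then b i * (1/(x i - x j)) else 0) := by
        rw [← Finset.sum_add_distrib]
        exact Finset.sum_congr rfl fun i _ => by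
          rw [← Finset.sum_add_distrib]
          exact Finset.sum_congr rfl fun j _ => split i j
    _ = (∑ i ∈ I, ∑ j ∈ I, (if i < j then b j * (1/(x j - x i)) else 0))
        + ∑ i ∈ I, ∑ j ∈ I, (if j < i then b j * (1/(x j - x i)) else 0) := by
        congr 1
        exact Finset.sum_comm
    _ = ∑ i ∈ I, ∑ j ∈ I, (if i ≠ j then b j * (1/(x j - x i)) else 0) := by
        rw [← Finset.sum_add_distrib]
        refine Finset.sum_congr rfl fun i _ => ?_
        rw [← Finset.sum_add_distrib]
        refine Finset.sum_congr rfl fun j _ => ?_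
        rcases lt_trichotomy i j with h | h | h
        · simp [h, not_lt.mpr h.le, h.ne]
        · simp [h]
        · simp [h, not_lt.mpr h.le, h.ne']
    _ = ∑ j ∈ I, ∑ i ∈ I, (if i ≠ j then b j * (1/(x j - x i)) else 0) := Finset.sum_comm
    _ = ∑ j ∈ I, b j * ∑ i ∈ I, (if i ≠ j then 1/(x j - x i) else 0) := by
        refine Finset.sum_congr rfl fun j _ => ?_
        rw [Finset.mul_sum]
        exact Finset.sum_congr rfl fun i _ => by split_ifs <;> simp

/-- The Lyapunov drift identity for the finite-dimensional gap dynamics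
(cf. the proof of Lemma `lem:DBMfc`):
`f₁(y) = Σ_{i₁ ≤ i < j ≤ i₂} ( (1/y_{(i,j)}) Σ_{i<a<j} β η^I_a(y) − 1/y_{(i,j)}² )
       = ((β−1)/2) Σ_{i ≠ j ∈ [i₁,i₂]} 1/(x_j − x_i)²`.
Particles are `x i` for `i ∈ [i₁,i₂]`, the gap indexed by the integer `a`
(encoding the half-integer `a + 1/2`) is `y a = x (a+1) − x a`, and
`η a = 1/y_a − ψ^I_a(y_a,y)` where `ψ^I_a` sums over the particles `i` of the
window with `|i − (a+1/2)| > 1`, i.e. `i ≤ a−1` or `i ≥ a+2`, and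
`z_{(a,i)} = x i − x (a+1)` (resp. `x a − x i`) on the right (resp. left). -/
theorem stmt10 (β : ℝ) (hβ : 1 ≤ β) (i₁ i₂ : ℤ) (h12 : i₁ ≤ i₂)
    (x : ℤ → ℝ) (hx : ∀ i j : ℤ, i₁ ≤ i → i < j → j ≤ i₂ → x i < x j)
    (y : ℤ → ℝ) (hy : ∀ a : ℤ, y a = x (a+1) - x a)
    (η : ℤ → ℝ)
    (hη : ∀ a : ℤ, η a = 1 / y a -
      (1/2) * ∑ i ∈ (Finset.Icc i₁ i₂).filter (fun i => i ≤ a - 1 ∨ a + 2 ≤ i),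
        y a / ((if a + 2 ≤ i then x i - x (a+1) else x a - x i) *
               (y a + (if a + 2 ≤ i then x i - x (a+1) else x a - x i)))) :
    (∑ i ∈ Finset.Icc i₁ i₂, ∑ j ∈ Finset.Icc i₁ i₂,
        (if i < j then
          ((1 / (x j - x i)) * (∑ a ∈ Finset.Ico i j, β * η a) - 1 / (x j - x i)^2)
        else 0))
      = ((β - 1)/2) * ∑ i ∈ Finset.Icc i₁ i₂,
          ∑ j ∈ (Finset.Icc i₁ i₂).filter (fun j => j ≠ i), 1 / (x j - x i)^2 := by
  classical
  set b : ℤ → ℝ := fun k => ∑ l ∈ Finset.Icc i₁ i₂, if l ≠ k then 1/(x k - x l) else 0 with hb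
  have hx' : ∀ i ∈ Finset.Icc i₁ i₂, ∀ j ∈ Finset.Icc i₁ i₂, i ≠ j → x i ≠ x j := by
    intro i hi j hj hne
    rw [Finset.mem_Icc] at hi hj
    rcases lt_or_gt_of_ne hne with h | h
    · exact ne_of_lt (hx i j hi.1 h hj.2)
    · exact (ne_of_lt (hx j i hj.1 h hi.2)).symm
  -- Step A : η in terms of b
  have hetab : ∀ a : ℤ, i₁ ≤ a → a + 1 ≤ i₂ → η a = (1/2) * (b (a+1) - b a) := by
    intro a ha1 ha2
    have hPa : a ∉ (Finset.Icc i₁ i₂).filter (fun l => l ≤ a - 1 ∨ a + 2 ≤ l) := by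
      simp only [Finset.mem_filter, Finset.mem_Icc]; omega
    have hPa1 : a + 1 ∉ (Finset.Icc i₁ i₂).filter (fun l => l ≤ a - 1 ∨ a + 2 ≤ l) := by
      simp only [Finset.mem_filter, Finset.mem_Icc]; omega
    have hb1 : b (a+1) = 1/(x (a+1) - x a)
        + ∑ l ∈ (Finset.Icc i₁ i₂).filter (fun l => l ≤ a - 1 ∨ a + 2 ≤ l), 1/(x (a+1) - x l) := by
      rw [hb]
      simp only
      rw [← Finset.sum_filter]
      rw [show (Finset.Icc i₁ i₂).filter (fun l => l ≠ a + 1)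
          = insert a ((Finset.Icc i₁ i₂).filter (fun l => l ≤ a - 1 ∨ a + 2 ≤ l)) by
        ext l; simp only [Finset.mem_filter, Finset.mem_Icc, Finset.mem_insert]; omega]
      rw [Finset.sum_insert hPa]
    have hb2 : b a = 1/(x a - x (a+1))
        + ∑ l ∈ (Finset.Icc i₁ i₂).filter (fun l => l ≤ a - 1 ∨ a + 2 ≤ l), 1/(x a - x l) := by
      rw [hb]
      simp only
      rw [← Finset.sum_filter]
      rw [show (Finset.Icc i₁ i₂).filter (fun l => l ≠ a)
          = insert (a+1) ((Finset.Icc i₁ i₂).filter (fun l => l ≤ a - 1 ∨ a + 2 ≤ l)) by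
        ext l; simp only [Finset.mem_filter, Finset.mem_Icc, Finset.mem_insert]; omega]
      rw [Finset.sum_insert hPa1]
    have hyy : x a < x (a+1) := hx a (a+1) ha1 (lt_add_one a) ha2
    have hW : ∀ l ∈ (Finset.Icc i₁ i₂).filter (fun l => l ≤ a - 1 ∨ a + 2 ≤ l),
        (x (a+1) - x a) / ((if a + 2 ≤ l then x l - x (a+1) else x a - x l) *
            ((x (a+1) - x a) + (if a + 2 ≤ l then x l - x (a+1) else x a - x l)))
          = 1/(x a - x l) - 1/(x (a+1) - x l) := by
      intro l hl
      rw [Finset.mem_filter, Finset.mem_Icc] at hl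
      by_cases hc : a + 2 ≤ l
      · simp only [if_pos hc]
        have h1 : x (a+1) < x l := hx (a+1) l (by omega) (by omega) (by omega)
        have h2 : x a < x l := hx a l ha1 (by omega) (by omega)
        have n1 : x l - x (a+1) ≠ 0 := sub_ne_zero.mpr (ne_of_lt h1).symm
        have n2 : x (a+1) - x a + (x l - x (a+1)) ≠ 0 := by
          rw [show x (a+1) - x a + (x l - x (a+1)) = x l - x a by ring]
          exact sub_ne_zero.mpr (ne_of_lt h2).symm
        have n3 : x a - x l ≠ 0 := sub_ne_zero.mpr (ne_of_lt h2)
        have n4 : x (a+1) - x l ≠ 0 := sub_ne_zero.mpr (ne_of_lt h1)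
        rw [div_sub_div _ _ n3 n4, div_eq_div_iff (mul_ne_zero n1 n2) (mul_ne_zero n3 n4)]
        ring
      · simp only [if_neg hc]
        have hl' : l ≤ a - 1 := by omega
        have h1 : x l < x a := hx l a hl.1.1 (by omega) (by omega)
        have h2 : x l < x (a+1) := hx l (a+1) hl.1.1 (by omega) (by omega)
        have n1 : x a - x l ≠ 0 := sub_ne_zero.mpr (ne_of_lt h1).symm
        have n2 : x (a+1) - x a + (x a - x l) ≠ 0 := by
          rw [show x (a+1) - x a + (x a - x l) = x (a+1) - x l by ring]
          exact sub_ne_zero.mpr (ne_of_lt h2).symm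
        have n4 : x (a+1) - x l ≠ 0 := sub_ne_zero.mpr (ne_of_lt h2).symm
        rw [div_sub_div _ _ n1 n4, div_eq_div_iff (mul_ne_zero n1 n2) (mul_ne_zero n1 n4)]
        ring
    rw [hη a, hy a, hb1, hb2, Finset.sum_congr rfl hW, Finset.sum_sub_distrib]
    rw [show x a - x (a+1) = -(x (a+1) - x a) by ring, one_div_neg_eq_neg_one_div]
    ring
  -- Step B : telescoping the drift sum
  have hsum : ∀ i ∈ Finset.Icc i₁ i₂, ∀ j ∈ Finset.Icc i₁ i₂, i < j →
      ∑ a ∈ Finset.Ico i j, β * η a = (β/2) * (b j - b i) := by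
    intro i hi j hj hij
    rw [Finset.mem_Icc] at hi hj
    have step : ∀ a ∈ Finset.Ico i j, β * η a = (β/2) * (b (a+1) - b a) := by
      intro a ha
      rw [Finset.mem_Ico] at ha
      rw [hetab a (by omega) (by omega)]
      ring
    rw [Finset.sum_congr rfl step, ← Finset.mul_sum, tele b i j (le_of_lt hij)]
  -- Rewrite the LHS
  have lhs1 : (∑ i ∈ Finset.Icc i₁ i₂, ∑ j ∈ Finset.Icc i₁ i₂,
        (if i < j then
          ((1 / (x j - x i)) * (∑ a ∈ Finset.Ico i j, β * η a) - 1 / (x j - x i)^2)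
        else 0))
      = (β/2) * (∑ i ∈ Finset.Icc i₁ i₂, ∑ j ∈ Finset.Icc i₁ i₂,
          (if i < j then (b j - b i)/(x j - x i) else 0))
        - ∑ i ∈ Finset.Icc i₁ i₂, ∑ j ∈ Finset.Icc i₁ i₂,
          (if i < j then 1/(x j - x i)^2 else 0) := by
    rw [Finset.mul_sum, ← Finset.sum_sub_distrib]
    refine Finset.sum_congr rfl fun i hi => ?_
    rw [Finset.mul_sum, ← Finset.sum_sub_distrib]
    refine Finset.sum_congr rfl fun j hj => ?_
    by_cases h : i < j
    · simp only [if_pos h]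
      rw [hsum i hi j hj h]
      ring
    · simp only [if_neg h]; ring
  rw [lhs1]
  -- P = T
  have hbk : ∀ k : ℤ, (∑ l ∈ Finset.Icc i₁ i₂, if l ≠ k then 1/(x k - x l) else 0) = b k :=
    fun k => rfl
  have hP : (∑ i ∈ Finset.Icc i₁ i₂, ∑ j ∈ Finset.Icc i₁ i₂,
        (if i < j then (b j - b i)/(x j - x i) else 0))
      = ∑ i ∈ Finset.Icc i₁ i₂, ∑ j ∈ Finset.Icc i₁ i₂,
          (if j ≠ i then 1/(x j - x i)^2 else 0) := by
    rw [pairsum (Finset.Icc i₁ i₂) x b]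
    rw [← sumsq (Finset.Icc i₁ i₂) x hx']
    refine Finset.sum_congr rfl fun j _ => ?_
    rw [hbk j, sq]
  rw [hP]
  -- Q + Q = T
  have hQ : (∑ i ∈ Finset.Icc i₁ i₂, ∑ j ∈ Finset.Icc i₁ i₂,
        (if i < j then 1/(x j - x i)^2 else 0))
      + (∑ i ∈ Finset.Icc i₁ i₂, ∑ j ∈ Finset.Icc i₁ i₂,
        (if i < j then 1/(x j - x i)^2 else 0))
      = ∑ i ∈ Finset.Icc i₁ i₂, ∑ j ∈ Finset.Icc i₁ i₂,
          (if j ≠ i then 1/(x j - x i)^2 else 0) := by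
    have swap : (∑ i ∈ Finset.Icc i₁ i₂, ∑ j ∈ Finset.Icc i₁ i₂,
          (if i < j then 1/(x j - x i)^2 else 0))
        = ∑ i ∈ Finset.Icc i₁ i₂, ∑ j ∈ Finset.Icc i₁ i₂,
          (if j < i then 1/(x j - x i)^2 else 0) := by
      rw [show (∑ i ∈ Finset.Icc i₁ i₂, ∑ j ∈ Finset.Icc i₁ i₂,
            (if i < j then 1/(x j - x i)^2 else 0))
          = ∑ j ∈ Finset.Icc i₁ i₂, ∑ i ∈ Finset.Icc i₁ i₂,
            (if i < j then 1/(x j - x i)^2 else 0) from Finset.sum_comm]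
      refine Finset.sum_congr rfl fun i _ => Finset.sum_congr rfl fun j _ => ?_
      by_cases h : j < i
      · simp only [if_pos h]
        rw [show (x i - x j)^2 = (x j - x i)^2 by ring]
      · simp only [if_neg h]
    nth_rewrite 2 [swap]
    rw [← Finset.sum_add_distrib]
    refine Finset.sum_congr rfl fun i _ => ?_
    rw [← Finset.sum_add_distrib]
    refine Finset.sum_congr rfl fun j _ => ?_
    rcases lt_trichotomy i j with h | h | h
    · simp [h, not_lt.mpr h.le, h.ne']
    · simp [h]
    · simp [h, not_lt.mpr h.le, h.ne]
  -- RHS filter → guard form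
  have rhsT : (∑ i ∈ Finset.Icc i₁ i₂,
        ∑ j ∈ (Finset.Icc i₁ i₂).filter (fun j => j ≠ i), 1 / (x j - x i)^2)
      = ∑ i ∈ Finset.Icc i₁ i₂, ∑ j ∈ Finset.Icc i₁ i₂,
          (if j ≠ i then 1/(x j - x i)^2 else 0) :=
    Finset.sum_congr rfl fun i _ => Finset.sum_filter _ _
  rw [rhsT]
  linarith [hQ]
end
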